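/- With G_k^{(d)} and μ_d as above, define A_{2k}^{(d)} = ∫_0^1 x·G_{2k}^{(d)}(x) dμ_d(x) and B_{2k+1}^{(d)} = ∫_0^1 G_{2k+1}^{(d)}(x) dμ_d(x). Then A_0^{(d)} = Z_d/(d-1), A_{2k}^{(d)} = (-1)^{k+1} Z_d (2k-3)!!/∏_{j=0}^{k}(d+2j-1) for k ≥ 1, and B_{2k+1}^{(d)} = (-1)^k Z_d (2k-1)!!/∏_{j=0}^{k}(d+2j-1) for k ≥ 0. -/

import Mathlib

open scoped Nat
open MeasureTheory

noncomputable def geg (d : ℕ) : ℕ → ℝ → ℝ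
  | 0, _ => 1
  | 1, x => x
  | (k + 2), x =>
      (((d : ℝ) + 2 * (k + 2) - 4) / ((d : ℝ) + (k + 2) - 3)) * x * geg d (k + 1) x
        - (((k : ℝ) + 1) / ((d : ℝ) + (k + 2) - 3)) * geg d k x

/-- The normalizing constant `Z_d = Γ(d/2)/(√π·Γ((d-1)/2))` of the measure `μ_d`. -/
noncomputable def Zc (d : ℕ) : ℝ :=
  Real.Gamma ((d : ℝ) / 2) / (Real.sqrt Real.pi * Real.Gamma (((d : ℝ) - 1) / 2))

/-- `A_{2k}^{(d)} = ∫_0^1 x·G_{2k}^{(d)}(x) dμ_d(x)` where `dμ_d = Z_d (1-x²)^{(d-3)/2} dx`. -/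
noncomputable def Ageg (d k : ℕ) : ℝ :=
  ∫ x in (0:ℝ)..1, x * geg d (2 * k) x * (Zc d * (1 - x ^ 2) ^ (((d : ℝ) - 3) / 2))

/-- `B_{2k+1}^{(d)} = ∫_0^1 G_{2k+1}^{(d)}(x) dμ_d(x)`. -/
noncomputable def Bgeg (d k : ℕ) : ℝ :=
  ∫ x in (0:ℝ)..1, geg d (2 * k + 1) x * (Zc d * (1 - x ^ 2) ^ (((d : ℝ) - 3) / 2))

/-! The Gegenbauer polynomials satisfy `(1 - x²) G_n' = n (G_{n-1} - x G_n)`, hence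
`(G_n (1 - x²)^((d-1)/2))' = (n G_{n-1} - (d+n-1) x G_n) (1 - x²)^((d-3)/2)`.
Integrating over `[0, 1]` relates the half-range integrals `I_m = ∫₀¹ G_m w` and
`J_m = ∫₀¹ x G_m w` against the weight `w = (1 - x²)^((d-3)/2)` to the explicit value `G_n(0)`,
while the integrated three-term recurrence relates `J_{n+1}` to `I_n` and `I_{n+2}`. Together they
determine `I_{2k+1}` and `J_{2k}` by induction on `k`. -/

open Set

lemma geg_add_two (d k : ℕ) :
    geg d (k + 2) = fun x => ((d : ℝ) + 2 * (k + 2) - 4) / ((d : ℝ) + (k + 2) - 3) * x *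
      geg d (k + 1) x - ((k : ℝ) + 1) / ((d : ℝ) + (k + 2) - 3) * geg d k x := rfl

lemma add_mul_geg_add_two {d : ℕ} (hd : 2 ≤ d) (n : ℕ) (x : ℝ) :
    ((d : ℝ) + n - 1) * geg d (n + 2) x
      = ((d : ℝ) + 2 * n) * x * geg d (n + 1) x - (n + 1) * geg d n x := by
  have hne : (d : ℝ) + (n + 2) - 3 ≠ 0 := by
    have : (2 : ℝ) ≤ d := by exact_mod_cast hd
    linarith [n.cast_nonneg (α := ℝ)]
  rw [geg_add_two]
  field_simp
  ring

lemma differentiable_geg (d n : ℕ) : Differentiable ℝ (geg d n) := by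
  induction n using Nat.twoStepInduction with
  | zero => exact differentiable_const _
  | one => exact differentiable_id
  | more k hk hk1 =>
    rw [geg_add_two]
    exact ((differentiable_const _).mul differentiable_id |>.mul hk1).sub
      ((differentiable_const _).mul hk)

@[fun_prop]
lemma continuous_geg (d n : ℕ) : Continuous (geg d n) :=
  (differentiable_geg d n).continuous

lemma add_mul_deriv_geg_add_two {d : ℕ} (hd : 2 ≤ d) (n : ℕ) (x : ℝ) :
    ((d : ℝ) + n - 1) * deriv (geg d (n + 2)) x
      = ((d : ℝ) + 2 * n) * (geg d (n + 1) x + x * deriv (geg d (n + 1)) x)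
        - (n + 1) * deriv (geg d n) x := by
  have hL := (differentiable_geg d (n + 2) x).hasDerivAt.const_mul ((d : ℝ) + n - 1)
  have hR := (((hasDerivAt_id x).const_mul ((d : ℝ) + 2 * n)).mul
    (differentiable_geg d (n + 1) x).hasDerivAt).sub
      ((differentiable_geg d n x).hasDerivAt.const_mul ((n : ℝ) + 1))
  rw [show (fun y => ((d : ℝ) + n - 1) * geg d (n + 2) y) = _ from
    funext (add_mul_geg_add_two hd n)] at hL
  exact (hL.unique hR).trans (by simp only [id]; ring)

lemma one_sub_sq_mul_deriv_geg_succ {d : ℕ} (hd : 2 ≤ d) (n : ℕ) (x : ℝ) :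
    (1 - x ^ 2) * deriv (geg d (n + 1)) x = (n + 1) * (geg d n x - x * geg d (n + 1) x) := by
  have hd' : (2 : ℝ) ≤ d := by exact_mod_cast hd
  induction n using Nat.twoStepInduction with
  | zero =>
    simp only [show geg d 1 = fun y => y from rfl, deriv_id'', show geg d 0 x = 1 from rfl]
    ring
  | one =>
    have D := add_mul_deriv_geg_add_two hd 0 x
    have R := add_mul_geg_add_two hd 0 x
    simp only [show geg d 1 = fun y => y from rfl, deriv_id'', show geg d 0 = fun _ => 1 from rfl,
      deriv_const'] at D R ⊢
    apply mul_left_cancel₀ (show (d : ℝ) - 1 ≠ 0 by linarith)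
    push_cast at D R ⊢
    linear_combination (1 - x ^ 2) * D + 2 * x * R
  | more n ih0 ih1 =>
    have D := add_mul_deriv_geg_add_two hd (n + 1) x
    have R1 := add_mul_geg_add_two hd (n + 1) x
    have R0 := add_mul_geg_add_two hd n x
    apply mul_left_cancel₀ (show (d : ℝ) + n ≠ 0 by positivity)
    simp only [show n + 1 + 2 = n + 3 from rfl, show n + 1 + 1 = n + 2 from rfl] at D R1 ih1 ⊢
    push_cast at D R1 R0 ih0 ih1 ⊢
    linear_combination (1 - x ^ 2) * D + ((d : ℝ) + 2 * n + 2) * x * ih1 - (n + 2) * ih0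
      + (n + 3) * x * R1 - (n + 2) * R0

lemma one_sub_sq_mul_deriv_geg {d : ℕ} (hd : 2 ≤ d) (n : ℕ) (x : ℝ) :
    (1 - x ^ 2) * deriv (geg d n) x = n * (geg d (n - 1) x - x * geg d n x) := by
  cases n with
  | zero => simp [show geg d 0 = fun _ => 1 from rfl]
  | succ n => simpa using one_sub_sq_mul_deriv_geg_succ hd n x

lemma intervalIntegrable_mul_one_sub_sq_rpow {r : ℝ} (hr : -1 < r) {p : ℝ → ℝ}
    (hp : ContinuousOn p (Icc 0 1)) :
    IntervalIntegrable (fun x => p x * (1 - x ^ 2) ^ r) volume 0 1 := by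
  have hsing : IntervalIntegrable (fun x : ℝ => (1 - x) ^ r) volume 0 1 := by
    simpa using
      ((intervalIntegral.intervalIntegrable_rpow' hr (a := 0) (b := 1)).comp_sub_left 1).symm
  have hcont : ContinuousOn (fun x : ℝ => p x * (1 + x) ^ r) (uIcc 0 1) := by
    rw [uIcc_of_le zero_le_one]
    refine hp.mul (ContinuousOn.rpow_const (by fun_prop) fun x hx => Or.inl ?_)
    linarith [hx.1]
  refine (hsing.mul_continuousOn hcont).congr fun x hx => ?_
  rw [uIoc_of_le zero_le_one] at hx
  have hfactor : 1 - x ^ 2 = (1 - x) * (1 + x) := by ring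
  rw [hfactor, Real.mul_rpow (by linarith [hx.2]) (by linarith [hx.1])]
  ring

noncomputable def gegIntegral (d m : ℕ) : ℝ :=
  ∫ x in (0 : ℝ)..1, geg d m x * (1 - x ^ 2) ^ (((d : ℝ) - 3) / 2)

noncomputable def gegMoment (d m : ℕ) : ℝ :=
  ∫ x in (0 : ℝ)..1, x * geg d m x * (1 - x ^ 2) ^ (((d : ℝ) - 3) / 2)

lemma intervalIntegrable_mul_one_sub_sq_rpow_of_two_le {d : ℕ} (hd : 2 ≤ d) {p : ℝ → ℝ}
    (hp : Continuous p) :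
    IntervalIntegrable (fun x => p x * (1 - x ^ 2) ^ (((d : ℝ) - 3) / 2)) volume 0 1 := by
  have : (2 : ℝ) ≤ d := by exact_mod_cast hd
  exact intervalIntegrable_mul_one_sub_sq_rpow (by linarith) hp.continuousOn

lemma hasDerivAt_geg_mul_one_sub_sq_rpow {d : ℕ} (hd : 2 ≤ d) (n : ℕ) {x : ℝ}
    (hx : x ∈ Ioo (-1 : ℝ) 1) :
    HasDerivAt (fun y => geg d n y * (1 - y ^ 2) ^ (((d : ℝ) - 1) / 2))
      ((n * geg d (n - 1) x - ((d : ℝ) + n - 1) * (x * geg d n x))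
        * (1 - x ^ 2) ^ (((d : ℝ) - 3) / 2)) x := by
  have hpos : 0 < 1 - x ^ 2 := by nlinarith [hx.1, hx.2]
  have hweight : HasDerivAt (fun y => (1 - y ^ 2) ^ (((d : ℝ) - 1) / 2))
      (-((d : ℝ) - 1) * x * (1 - x ^ 2) ^ (((d : ℝ) - 3) / 2)) x := by
    convert ((hasDerivAt_pow 2 x).const_sub 1).rpow_const (p := ((d : ℝ) - 1) / 2)
      (Or.inl hpos.ne') using 1
    rw [show ((d : ℝ) - 1) / 2 - 1 = ((d : ℝ) - 3) / 2 by ring]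
    push_cast
    ring
  have hshift : (1 - x ^ 2) ^ (((d : ℝ) - 1) / 2)
      = (1 - x ^ 2) * (1 - x ^ 2) ^ (((d : ℝ) - 3) / 2) := by
    rw [show ((d : ℝ) - 1) / 2 = ((d : ℝ) - 3) / 2 + 1 by ring, Real.rpow_add_one hpos.ne']
    ring
  refine ((differentiable_geg d n x).hasDerivAt.mul hweight).congr_deriv ?_
  rw [hshift]
  linear_combination (1 - x ^ 2) ^ (((d : ℝ) - 3) / 2) * one_sub_sq_mul_deriv_geg hd n x

lemma mul_gegIntegral_sub_mul_gegMoment {d : ℕ} (hd : 2 ≤ d) (n : ℕ) :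
    n * gegIntegral d (n - 1) - ((d : ℝ) + n - 1) * gegMoment d n = -geg d n 0 := by
  have hd' : (1 : ℝ) < d := by exact_mod_cast hd
  have hcont : ContinuousOn (fun y => geg d n y * (1 - y ^ 2) ^ (((d : ℝ) - 1) / 2)) (Icc 0 1) :=
    ((continuous_geg d n).mul
      ((Real.continuous_rpow_const (by linarith)).comp (by fun_prop))).continuousOn
  have hftc := intervalIntegral.integral_eq_sub_of_hasDerivAt_of_le zero_le_one hcont
    (fun x hx => hasDerivAt_geg_mul_one_sub_sq_rpow hd n (Ioo_subset_Ioo_left (by norm_num) hx))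
    (intervalIntegrable_mul_one_sub_sq_rpow_of_two_le hd (by fun_prop))
  have hI := intervalIntegrable_mul_one_sub_sq_rpow_of_two_le hd (continuous_geg d (n - 1))
  have hJ := intervalIntegrable_mul_one_sub_sq_rpow_of_two_le hd (p := fun x => x * geg d n x)
    (by fun_prop)
  have hsplit : ∫ x in (0 : ℝ)..1, (n * geg d (n - 1) x - ((d : ℝ) + n - 1) * (x * geg d n x))
        * (1 - x ^ 2) ^ (((d : ℝ) - 3) / 2)
      = n * gegIntegral d (n - 1) - ((d : ℝ) + n - 1) * gegMoment d n := by
    rw [gegIntegral, gegMoment, ← intervalIntegral.integral_const_mul,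
      ← intervalIntegral.integral_const_mul,
      ← intervalIntegral.integral_sub (hI.const_mul _) (hJ.const_mul _)]
    exact intervalIntegral.integral_congr fun x _ => by ring
  rw [← hsplit, hftc]
  simp [Real.zero_rpow (by linarith : ((d : ℝ) - 1) / 2 ≠ 0)]

lemma add_mul_gegMoment_succ {d : ℕ} (hd : 2 ≤ d) (n : ℕ) :
    ((d : ℝ) + 2 * n) * gegMoment d (n + 1)
      = ((d : ℝ) + n - 1) * gegIntegral d (n + 2) + (n + 1) * gegIntegral d n := by
  have hI2 := intervalIntegrable_mul_one_sub_sq_rpow_of_two_le hd (continuous_geg d (n + 2))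
  have hI0 := intervalIntegrable_mul_one_sub_sq_rpow_of_two_le hd (continuous_geg d n)
  rw [gegIntegral, gegIntegral, gegMoment, ← intervalIntegral.integral_const_mul,
    ← intervalIntegral.integral_const_mul, ← intervalIntegral.integral_const_mul,
    ← intervalIntegral.integral_add (hI2.const_mul _) (hI0.const_mul _)]
  refine intervalIntegral.integral_congr fun x _ => ?_
  linear_combination -(1 - x ^ 2) ^ (((d : ℝ) - 3) / 2) * add_mul_geg_add_two hd n x

lemma geg_two_mul_zero_mul_prod {d : ℕ} (hd : 2 ≤ d) (k : ℕ) :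
    geg d (2 * k) 0 * ∏ j ∈ Finset.range k, ((d : ℝ) + 2 * j - 1)
      = (-1) ^ k * ((2 * k - 1)‼ : ℝ) := by
  induction k with
  | zero => simp [show geg d 0 0 = 1 from rfl]
  | succ k ih =>
    have hrec := add_mul_geg_add_two hd (2 * k) 0
    rw [show 2 * k + 1 + 1 = 2 * (k + 1) from rfl] at hrec
    rw [Finset.prod_range_succ, show 2 * (k + 1) - 1 = 2 * k + 1 by omega,
      Nat.doubleFactorial_add_one]
    push_cast at hrec ⊢
    linear_combination (∏ j ∈ Finset.range k, ((d : ℝ) + 2 * j - 1)) * hrec - (2 * k + 1) * ih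

lemma gegMoment_zero {d : ℕ} (hd : 2 ≤ d) : gegMoment d 0 * ((d : ℝ) - 1) = 1 := by
  have hftc := mul_gegIntegral_sub_mul_gegMoment hd 0
  rw [show geg d 0 0 = 1 from rfl] at hftc
  push_cast at hftc
  linear_combination -hftc

lemma gegMoment_two_mul_add_two_mul_prod {d : ℕ} (hd : 2 ≤ d) {k : ℕ}
    (hI : gegIntegral d (2 * k + 1) * ∏ j ∈ Finset.range (k + 1), ((d : ℝ) + 2 * j - 1)
      = (-1) ^ k * ((2 * k - 1)‼ : ℝ)) :
    gegMoment d (2 * k + 2) * ∏ j ∈ Finset.range (k + 2), ((d : ℝ) + 2 * j - 1)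
      = (-1) ^ k * ((2 * k - 1)‼ : ℝ) := by
  have hftc := mul_gegIntegral_sub_mul_gegMoment hd (2 * k + 2)
  have hzero := geg_two_mul_zero_mul_prod hd (k + 1)
  rw [show 2 * k + 2 - 1 = 2 * k + 1 from rfl] at hftc
  rw [show 2 * (k + 1) = 2 * k + 2 from rfl, show 2 * k + 2 - 1 = 2 * k + 1 from rfl,
    Nat.doubleFactorial_add_one] at hzero
  rw [Finset.prod_range_succ _ (k + 1)]
  push_cast at hftc hzero ⊢
  linear_combination -(∏ j ∈ Finset.range (k + 1), ((d : ℝ) + 2 * j - 1)) * hftc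
    + (2 * k + 2) * hI + hzero

lemma gegIntegral_two_mul_add_one_mul_prod {d : ℕ} (hd : 2 ≤ d) (k : ℕ) :
    gegIntegral d (2 * k + 1) * ∏ j ∈ Finset.range (k + 1), ((d : ℝ) + 2 * j - 1)
      = (-1) ^ k * ((2 * k - 1)‼ : ℝ) := by
  induction k with
  | zero =>
    have hI1 : gegIntegral d 1 = gegMoment d 0 := by
      simp only [gegIntegral, gegMoment, show geg d 1 = fun x => x from rfl,
        show geg d 0 = fun _ => 1 from rfl, mul_one]
    simpa [hI1] using gegMoment_zero hd
  | succ k ih =>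
    have hJ := gegMoment_two_mul_add_two_mul_prod hd ih
    have hrec := add_mul_gegMoment_succ hd (2 * k + 1)
    have hne : (d : ℝ) + 2 * k ≠ 0 := by
      have : (2 : ℝ) ≤ d := by exact_mod_cast hd
      positivity
    rw [show 2 * k + 1 + 1 = 2 * k + 2 from rfl, show 2 * k + 1 + 2 = 2 * (k + 1) + 1 from rfl]
      at hrec
    rw [Finset.prod_range_succ _ (k + 1)] at hJ ⊢
    rw [show 2 * (k + 1) - 1 = 2 * k + 1 by omega, Nat.doubleFactorial_add_one]
    apply mul_left_cancel₀ hne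
    push_cast at hJ hrec ⊢
    linear_combination
      -(∏ j ∈ Finset.range (k + 1), ((d : ℝ) + 2 * j - 1)) * ((d : ℝ) + 2 * k + 1) * hrec
        + ((d : ℝ) + 4 * k + 2) * hJ - (2 * k + 2) * ((d : ℝ) + 2 * k + 1) * ih

lemma Ageg_eq_mul_gegMoment (d k : ℕ) : Ageg d k = Zc d * gegMoment d (2 * k) := by
  rw [Ageg, gegMoment, ← intervalIntegral.integral_const_mul]
  exact intervalIntegral.integral_congr fun x _ => by ring

lemma Bgeg_eq_mul_gegIntegral (d k : ℕ) : Bgeg d k = Zc d * gegIntegral d (2 * k + 1) := by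
  rw [Bgeg, gegIntegral, ← intervalIntegral.integral_const_mul]
  exact intervalIntegral.integral_congr fun x _ => by ring

/-- `A_0 = Z_d/(d-1)`, `A_{2k} = (-1)^{k+1} Z_d (2k-3)!!/∏_{j=0}^{k}(d+2j-1)` for
`k ≥ 1`, and `B_{2k+1} = (-1)^k Z_d (2k-1)!!/∏_{j=0}^{k}(d+2j-1)` for `k ≥ 0`. -/
theorem stmt12 (d : ℕ) (hd : 2 ≤ d) :
    Ageg d 0 = Zc d / ((d : ℝ) - 1) ∧
    (∀ k : ℕ, 1 ≤ k →
      Ageg d k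
        = (-1) ^ (k + 1) * Zc d * ((2 * k - 3)‼ : ℝ)
            / ∏ j ∈ Finset.range (k + 1), ((d : ℝ) + 2 * j - 1)) ∧
    (∀ k : ℕ,
      Bgeg d k
        = (-1) ^ k * Zc d * ((2 * k - 1)‼ : ℝ)
            / ∏ j ∈ Finset.range (k + 1), ((d : ℝ) + 2 * j - 1)) := by
  have hd' : (2 : ℝ) ≤ d := by exact_mod_cast hd
  have hprod : ∀ k, ∏ j ∈ Finset.range k, ((d : ℝ) + 2 * j - 1) ≠ 0 := fun k =>
    Finset.prod_ne_zero_iff.mpr fun j _ => by linarith [j.cast_nonneg (α := ℝ)]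
  refine ⟨?_, fun k hk => ?_, fun k => ?_⟩
  · rw [Ageg_eq_mul_gegMoment, eq_div_iff (by linarith), mul_assoc, gegMoment_zero hd, mul_one]
  · obtain ⟨k, rfl⟩ := Nat.exists_eq_add_of_le' hk
    rw [Ageg_eq_mul_gegMoment, eq_div_iff (hprod _), mul_assoc,
      show 2 * (k + 1) = 2 * k + 2 from rfl,
      gegMoment_two_mul_add_two_mul_prod hd (gegIntegral_two_mul_add_one_mul_prod hd k),
      show 2 * k + 2 - 3 = 2 * k - 1 by omega]
    ring
  · rw [Bgeg_eq_mul_gegIntegral, eq_div_iff (hprod _), mul_assoc,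
      gegIntegral_two_mul_add_one_mul_prod hd k]
    ring
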